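/- arXiv:1312.4979 — 2 statements merged into one kernel-verified Lean document; each statement's English description precedes it below -/
import Mathlib

section
/- Let M be a nonnegative RCLL martingale under Q with M_0 = 1, τ = inf{t : M_t = 0}, and define P by dP/dQ|_{F_t} = M_{τ∧t}. For n ≥ 1 let τ_n = inf{t ≥ 0 : M_t < 1/n}. Then for each t and n, the measures P and Q are equivalent on the σ-algebra F_{t ∧ τ_n}. -/
open MeasureTheory Filter Set
open scoped ENNReal Topology

/-!
`P ≪ Q` because `P` has a density. Conversely let `σ = τ_n ∧ t` and let `s ∈ F_σ` be `P`-null.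
Before `σ` the path stays above `1/n`, so `M_σ = 0` would make `σ` the hitting time of zero with a
positive left limit there, i.e. a jump to zero; hence `M_σ > 0` a.s. On the other hand, by
right-continuity the density `M_{τ∧T}` dominates the infimum of `M` over a countable grid of
`(-∞, T]`, so on `s` that infimum vanishes. Splitting according to the first grid time at which `M`
drops below `ε`, the supermartingale property bounds the integral of `M_T` over this event by `ε`,
so `M_T = 0` a.s. on `s`. The martingale property propagates this to `M_u = 0` on `s ∩ {σ ≤ u}`
for grid times `u`, and right-continuity to `M_σ = 0` on `s`. Thus `Q s = 0`.
-/

theorem exists_seq_le_forall_mem_closure_Ici_inter_range (T : ℝ) :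
    ∃ e : ℕ → ℝ, (∀ j, e j ≤ T) ∧ ∀ c ≤ T, c ∈ closure (Ici c ∩ range e) := by
  refine ⟨fun k => min T (Denumerable.ofNat ℚ k), fun k => min_le_left _ _, fun c hc => ?_⟩
  refine Metric.mem_closure_iff.2 fun ε hε => ?_
  obtain ⟨q, hcq, hqε⟩ := exists_rat_btwn (lt_add_of_pos_right c hε)
  obtain ⟨k, hk⟩ := (Denumerable.eqv ℚ).symm.surjective q
  refine ⟨min T q, ⟨le_min hc hcq.le, k, by simp only [← hk]; rfl⟩, ?_⟩
  rw [Real.dist_eq, abs_sub_comm, abs_of_nonneg (sub_nonneg.2 (le_min hc hcq.le))]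
  linarith [min_le_right T (q : ℝ)]

theorem IsLeast.biInf_ofReal_eq {S : Set ℝ} {b : ℝ} (h : IsLeast S b) :
    ⨅ u ∈ S, ENNReal.ofReal u = ENNReal.ofReal b := by
  rw [← sInf_image]
  exact (ENNReal.ofReal_mono.map_isLeast h).isGLB.sInf_eq

theorem ae_mem_imp_eq_zero_of_setIntegral_nonpos {Ω : Type*} {mΩ : MeasurableSpace Ω}
    {μ : Measure Ω} {f : Ω → ℝ} {s : Set Ω} (hs : MeasurableSet s) (hf : 0 ≤ᵐ[μ] f)
    (hfi : Integrable f μ) (h : ∫ ω in s, f ω ∂μ ≤ 0) : ∀ᵐ ω ∂μ, ω ∈ s → f ω = 0 := by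
  have hf' : 0 ≤ᵐ[μ.restrict s] f := ae_restrict_of_ae hf
  exact (ae_restrict_iff' hs).1 <| (setIntegral_eq_zero_iff_of_nonneg_ae hf' hfi.integrableOn).1 <|
    h.antisymm (integral_nonneg_of_ae hf')

namespace MeasureTheory

variable {Ω ι : Type*} {mΩ : MeasurableSpace Ω} {μ : Measure Ω} [IsFiniteMeasure μ]

theorem Supermartingale.setIntegral_biUnion_lt_le [LinearOrder ι] {ℱ : Filtration ι mΩ}
    {M : ι → Ω → ℝ} (hM : Supermartingale M ℱ μ) {F : Finset ι} {T : ι} (hFT : ∀ v ∈ F, v ≤ T)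
    (ε : ℝ) :
    ∫ ω in ⋃ v ∈ F, {ω | M v ω < ε}, M T ω ∂μ ≤ ε * μ.real (⋃ v ∈ F, {ω | M v ω < ε}) := by
  classical
  set E : ι → Set Ω := fun v => {ω | M v ω < ε} ∩ ⋂ u ∈ F.filter (· < v), {ω | ε ≤ M u ω}
  have hE : ∀ v ∈ F, MeasurableSet[ℱ v] (E v) := fun v _ =>
    ((hM.stronglyAdapted v).measurable measurableSet_Iio).inter <| Finset.measurableSet_biInter _
      fun u hu => ℱ.mono (Finset.mem_filter.1 hu).2.le _
        ((hM.stronglyAdapted u).measurable measurableSet_Ici)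
  have hEm : ∀ v ∈ F, MeasurableSet (E v) := fun v hv => ℱ.le v _ (hE v hv)
  have hdisj : (F : Set ι).PairwiseDisjoint E := by
    have hdisj_lt : ∀ u ∈ F, ∀ v ∈ F, u < v → Disjoint (E u) (E v) := fun u hu v _ huv =>
      disjoint_left.2 fun ω hωu hωv => by
        have hεu : ε ≤ M u ω := mem_iInter₂.1 hωv.2 u (Finset.mem_filter.2 ⟨hu, huv⟩)
        exact hεu.not_gt hωu.1
    intro u hu v hv huv
    rcases huv.lt_or_gt with h | h
    exacts [hdisj_lt u hu v hv h, (hdisj_lt v hv u hu h).symm]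
  have hcover : ⋃ v ∈ F, {ω | M v ω < ε} = ⋃ v ∈ F, E v := by
    refine Subset.antisymm (fun ω hω => ?_) (biUnion_mono subset_rfl fun _ _ => inter_subset_left)
    obtain ⟨v, hvF, hv⟩ := mem_iUnion₂.1 hω
    have hne : (F.filter fun u => M u ω < ε).Nonempty := ⟨v, Finset.mem_filter.2 ⟨hvF, hv⟩⟩
    obtain ⟨hv₀F, hv₀⟩ := Finset.mem_filter.1 (Finset.min'_mem _ hne)
    refine mem_biUnion hv₀F ⟨hv₀, mem_iInter₂.2 fun u hu => (not_lt.1 fun hlt => ?_ : ε ≤ M u ω)⟩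
    obtain ⟨huF, hu₀⟩ := Finset.mem_filter.1 hu
    exact hu₀.not_ge (Finset.min'_le _ u (Finset.mem_filter.2 ⟨huF, hlt⟩))
  rw [hcover, integral_biUnion_finset F hEm hdisj fun v _ => (hM.integrable T).integrableOn,
    measureReal_biUnion_finset hdisj hEm, Finset.mul_sum]
  refine Finset.sum_le_sum fun v hv => ?_
  calc ∫ ω in E v, M T ω ∂μ ≤ ∫ ω in E v, M v ω ∂μ := hM.setIntegral_le (hFT v hv) (hE v hv)
    _ ≤ ∫ _ in E v, ε ∂μ := setIntegral_mono_on (hM.integrable v).integrableOn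
      (integrable_const ε).integrableOn (hEm v hv) fun ω hω => hω.1.le
    _ = ε * μ.real (E v) := by rw [setIntegral_const, smul_eq_mul, mul_comm]

theorem Supermartingale.setIntegral_iUnion_lt_le [LinearOrder ι] {ℱ : Filtration ι mΩ}
    {M : ι → Ω → ℝ} (hM : Supermartingale M ℱ μ) {e : ℕ → ι} {T : ι} (heT : ∀ j, e j ≤ T)
    {ε : ℝ} (hε : 0 ≤ ε) :
    ∫ ω in ⋃ j, {ω | M (e j) ω < ε}, M T ω ∂μ ≤ ε * μ.real (⋃ j, {ω | M (e j) ω < ε}) := by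
  set A : ℕ → Set Ω := fun j => {ω | M (e j) ω < ε}
  have hA : ∀ j, MeasurableSet (A j) := fun j =>
    measurableSet_lt ((hM.stronglyAdapted (e j)).measurable.mono (ℱ.le _) le_rfl) measurable_const
  have hlim := tendsto_setIntegral_of_monotone (s := accumulate A)
    (fun k => MeasurableSet.biUnion (to_countable _) fun j _ => hA j) monotone_accumulate
    (hM.integrable T).integrableOn
  rw [iUnion_accumulate] at hlim
  refine le_of_tendsto hlim (Eventually.of_forall fun k => ?_)
  have hk : accumulate A k = ⋃ v ∈ (Finset.Iic k).image e, {ω | M v ω < ε} := by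
    simp [accumulate_def, A]
  rw [hk]
  refine (hM.setIntegral_biUnion_lt_le (by simpa using fun j _ => heT j) ε).trans ?_
  rw [← hk]
  exact mul_le_mul_of_nonneg_left (measureReal_mono (accumulate_subset_iUnion k)) hε


theorem Supermartingale.ae_eq_zero_of_forall_exists_lt [LinearOrder ι] {ℱ : Filtration ι mΩ}
    {M : ι → Ω → ℝ} (hM : Supermartingale M ℱ μ) {e : ℕ → ι} {T : ι} (heT : ∀ j, e j ≤ T)
    (hnonneg : 0 ≤ᵐ[μ] M T) :
    ∀ᵐ ω ∂μ, (∀ ε > 0, ∃ j, M (e j) ω < ε) → M T ω = 0 := by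
  set H : ℝ → Set Ω := fun ε => ⋃ j, {ω | M (e j) ω < ε}
  set G := ⋂ m : ℕ, H (1 / (m + 1))
  have hG : MeasurableSet G := .iInter fun m => .iUnion fun j =>
    measurableSet_lt ((hM.stronglyAdapted (e j)).measurable.mono (ℱ.le _) le_rfl) measurable_const
  have hbound : ∀ m : ℕ, ∫ ω in G, M T ω ∂μ ≤ 1 / (m + 1) * μ.real univ := fun m =>
    calc ∫ ω in G, M T ω ∂μ ≤ ∫ ω in H (1 / (m + 1)), M T ω ∂μ :=
          setIntegral_mono_set (hM.integrable T).integrableOn (ae_restrict_of_ae hnonneg)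
            (iInter_subset _ m).eventuallyLE
      _ ≤ 1 / (m + 1) * μ.real (H (1 / (m + 1))) :=
          hM.setIntegral_iUnion_lt_le heT (by positivity)
      _ ≤ 1 / (m + 1) * μ.real univ :=
          mul_le_mul_of_nonneg_left (measureReal_mono (subset_univ _)) (by positivity)
  have hlim : Tendsto (fun m : ℕ => 1 / ((m : ℝ) + 1) * μ.real univ) atTop (𝓝 0) := by
    simpa using tendsto_one_div_add_atTop_nhds_zero_nat.mul_const (μ.real univ)
  filter_upwards [ae_mem_imp_eq_zero_of_setIntegral_nonpos hG hnonneg (hM.integrable T)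
    (ge_of_tendsto' hlim hbound)] with ω hω hsmall
  exact hω (mem_iInter.2 fun m => mem_iUnion.2 (hsmall _ (by positivity)))

theorem Submartingale.ae_eq_zero_of_ae_eq_zero_of_le [Preorder ι] {ℱ : Filtration ι mΩ}
    {M : ι → Ω → ℝ} (hM : Submartingale M ℱ μ) {i T : ι} (hiT : i ≤ T) (hnonneg : 0 ≤ᵐ[μ] M i)
    {A : Set Ω} (hA : MeasurableSet[ℱ i] A) (hT : ∀ᵐ ω ∂μ, ω ∈ A → M T ω = 0) :
    ∀ᵐ ω ∂μ, ω ∈ A → M i ω = 0 := by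
  refine ae_mem_imp_eq_zero_of_setIntegral_nonpos (ℱ.le i A hA) hnonneg (hM.integrable i) ?_
  calc ∫ ω in A, M i ω ∂μ ≤ ∫ ω in A, M T ω ∂μ := hM.setIntegral_le hiT hA
    _ = 0 := integral_eq_zero_of_ae ((ae_restrict_iff' (ℱ.le i A hA)).2 hT)

theorem Supermartingale.ae_eq_zero_of_setLIntegral_eq_zero {ℱ : Filtration ℝ mΩ}
    {M : ℝ → Ω → ℝ} (hM : Supermartingale M ℱ μ) {T : ℝ} (hnonneg : 0 ≤ᵐ[μ] M T)
    {c : Ω → ℝ} (hcT : ∀ ω, c ω ≤ T)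
    (hrc : ∀ ω, ContinuousWithinAt (fun t => M t ω) (Ici (c ω)) (c ω))
    {s : Set Ω} (hs : MeasurableSet s) (h : ∫⁻ ω in s, ENNReal.ofReal (M (c ω) ω) ∂μ = 0) :
    ∀ᵐ ω ∂μ, ω ∈ s → M T ω = 0 := by
  obtain ⟨e, heT, he⟩ := exists_seq_le_forall_mem_closure_Ici_inter_range T
  set g : Ω → ℝ≥0∞ := fun ω => ⨅ j, ENNReal.ofReal (M (e j) ω)
  have hg : Measurable g := .iInf fun j =>
    ((hM.stronglyAdapted (e j)).measurable.mono (ℱ.le _) le_rfl).ennreal_ofReal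
  have hg_le : ∀ ω, g ω ≤ ENNReal.ofReal (M (c ω) ω) := fun ω =>
    (isClosed_le continuous_const ENNReal.continuous_ofReal).closure_subset <|
      ((hrc ω).mono inter_subset_left).mem_closure (he _ (hcT ω)) fun _ ⟨_, j, hj⟩ =>
        hj ▸ iInf_le (fun j => ENNReal.ofReal (M (e j) ω)) j
  have hg_zero : ∀ᵐ ω ∂μ, ω ∈ s → g ω = 0 :=
    (ae_restrict_iff' hs).1 <| (lintegral_eq_zero_iff hg).1 <|
      nonpos_iff_eq_zero.1 (h ▸ lintegral_mono hg_le)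
  filter_upwards [hg_zero, hM.ae_eq_zero_of_forall_exists_lt heT hnonneg] with ω hgω hω hωs
  refine hω fun ε hε => ?_
  obtain ⟨j, hj⟩ := iInf_lt_iff.1 ((hgω hωs).trans_lt (ENNReal.ofReal_pos.2 hε))
  exact ⟨j, (ENNReal.ofReal_lt_ofReal_iff hε).1 hj⟩

theorem Submartingale.ae_eq_zero_of_ae_eq_zero_of_isStoppingTime {ℱ : Filtration ℝ mΩ}
    {M : ℝ → Ω → ℝ} (hM : Submartingale M ℱ μ) (hnonneg : ∀ t, 0 ≤ᵐ[μ] M t) {T : ℝ}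
    {σ : Ω → ℝ} (hσ : IsStoppingTime ℱ fun ω => (σ ω : WithTop ℝ)) (hσT : ∀ ω, σ ω ≤ T)
    (hrc : ∀ ω, ContinuousWithinAt (fun t => M t ω) (Ici (σ ω)) (σ ω))
    {s : Set Ω} (hs : MeasurableSet[hσ.measurableSpace] s) (hT : ∀ᵐ ω ∂μ, ω ∈ s → M T ω = 0) :
    ∀ᵐ ω ∂μ, ω ∈ s → M (σ ω) ω = 0 := by
  obtain ⟨e, heT, he⟩ := exists_seq_le_forall_mem_closure_Ici_inter_range T
  have hgrid : ∀ j, ∀ᵐ ω ∂μ, ω ∈ s ∩ {ω | σ ω ≤ e j} → M (e j) ω = 0 := fun j =>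
    hM.ae_eq_zero_of_ae_eq_zero_of_le (heT j) (hnonneg _) (by simpa using hs.2 (e j))
      (hT.mono fun ω h hω => h hω.1)
  filter_upwards [ae_all_iff.2 hgrid] with ω hω hωs
  exact isClosed_singleton.closure_subset <| ((hrc ω).mono inter_subset_left).mem_closure
    (he _ (hσT ω)) fun _ ⟨hσt, j, hj⟩ => hj ▸ hω j ⟨hωs, hj ▸ hσt⟩

end MeasureTheory

theorem isLeast_zeros_and_le_leftLim {f : ℝ → ℝ} {a b : ℝ} (ha : 0 < a) (hb0 : 0 ≤ b)
    (hf0 : f 0 ≠ 0) (hfb : f b = 0) (hb : ∀ u, 0 ≤ u → f u < a → b ≤ u)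
    (hll : ∀ u, 0 < u → ∃ l, Tendsto f (𝓝[<] u) (𝓝 l)) :
    IsLeast {u | 0 ≤ u ∧ f u = 0} b ∧ a ≤ Function.leftLim f b := by
  have hbpos : 0 < b := hb0.lt_of_ne fun h => hf0 (h ▸ hfb)
  refine ⟨⟨⟨hb0, hfb⟩, fun u ⟨hu, hfu⟩ => hb u hu (hfu ▸ ha)⟩, ?_⟩
  obtain ⟨l, hl⟩ := hll b hbpos
  rw [leftLim_eq_of_tendsto hl]
  exact ge_of_tendsto hl <| mem_of_superset (Ioo_mem_nhdsLT hbpos) fun u hu =>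
    not_lt.1 fun h => (hb u hu.1.le h).not_gt hu.2

theorem ae_ne_zero_at_min_hitting_time {Ω : Type*} {mΩ : MeasurableSpace Ω} {Q : Measure Ω}
    {M : ℝ → Ω → ℝ} {T t a : ℝ} (ha : 0 < a) (htT : t ≤ T) (hM0 : ∀ᵐ ω ∂Q, M 0 ω ≠ 0)
    (hll : ∀ ω, ∀ u : ℝ, 0 < u → ∃ l, Tendsto (fun s => M s ω) (𝓝[<] u) (𝓝 l))
    {τ τa : Ω → ℝ≥0∞} (hτ : ∀ ω, τ ω = ⨅ u ∈ {s : ℝ | 0 ≤ s ∧ M s ω = 0}, ENNReal.ofReal u)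
    (hτa : ∀ ω, τa ω = ⨅ u ∈ {s : ℝ | 0 ≤ s ∧ M s ω < a}, ENNReal.ofReal u)
    (hnojump : Q ({ω | τ ω ≤ ENNReal.ofReal T} ∩
      {ω | 0 < Function.leftLim (fun s => M s ω) ((τ ω).toReal)}) = 0) :
    ∀ᵐ ω ∂Q, M ((min (τa ω) (ENNReal.ofReal t)).toReal) ω ≠ 0 := by
  filter_upwards [hM0, measure_eq_zero_iff_ae_notMem.1 hnojump] with ω h0 hω hzero
  set x := min (τa ω) (ENNReal.ofReal t)
  have hx : x ≠ ∞ := ((min_le_right _ _).trans_lt ENNReal.ofReal_lt_top).ne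
  have hb : ∀ u, 0 ≤ u → M u ω < a → x.toReal ≤ u := fun u hu hua =>
    ENNReal.toReal_le_of_le_ofReal hu ((min_le_left _ _).trans (hτa ω ▸ iInf₂_le u ⟨hu, hua⟩))
  obtain ⟨hleast, hleft⟩ :=
    isLeast_zeros_and_le_leftLim ha ENNReal.toReal_nonneg h0 hzero hb (hll ω)
  have hτx : τ ω = x := by rw [hτ ω, hleast.biInf_ofReal_eq, ENNReal.ofReal_toReal hx]
  refine hω ⟨?_, ?_⟩
  · show τ ω ≤ ENNReal.ofReal T
    exact hτx ▸ (min_le_right _ _).trans (ENNReal.ofReal_le_ofReal htT)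
  · show 0 < Function.leftLim (fun s => M s ω) (τ ω).toReal
    exact hτx ▸ ha.trans_le hleft

theorem equivalent_on_stopped_sigma_algebra_general
    {Ω : Type*} {mΩ : MeasurableSpace Ω} (ℱ : Filtration ℝ mΩ)
    (Q : Measure Ω) [IsProbabilityMeasure Q]
    (M : ℝ → Ω → ℝ) (T : ℝ)
    (hmart : Martingale M ℱ Q)
    (hnonneg : ∀ t ω, 0 ≤ M t ω)
    (hM0 : ∀ᵐ ω ∂Q, M 0 ω = 1)
    -- RCLL paths
    (hrc : ∀ ω, ∀ t : ℝ, ContinuousWithinAt (fun s => M s ω) (Set.Ici t) t)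
    (hll : ∀ ω, ∀ t : ℝ, 0 < t →
      ∃ l : ℝ, Tendsto (fun s => M s ω) (nhdsWithin t (Set.Iio t)) (nhds l))
    -- the hitting time of zero, with convention `inf ∅ = +∞`
    (τ : Ω → ℝ≥0∞)
    (hτ : ∀ ω, τ ω = ⨅ t ∈ {s : ℝ | 0 ≤ s ∧ M s ω = 0}, ENNReal.ofReal t)
    -- `M` does not jump to zero
    (hnojump : Q ({ω | τ ω ≤ ENNReal.ofReal T} ∩
      {ω | 0 < Function.leftLim (fun s => M s ω) ((τ ω).toReal)}) = 0)
    -- the times `τ_n = inf {t ≥ 0 : M t < 1/n}`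
    (τn : ℕ → Ω → ℝ≥0∞)
    (hτn : ∀ n ω, τn n ω = ⨅ t ∈ {s : ℝ | 0 ≤ s ∧ M s ω < 1 / (n : ℝ)}, ENNReal.ofReal t)
    (P : Measure Ω)
    (hP : P = Q.withDensity
      (fun ω => ENNReal.ofReal (M ((min (τ ω) (ENNReal.ofReal T)).toReal) ω))) :
    ∀ n : ℕ, 1 ≤ n → ∀ t : ℝ, 0 ≤ t → t ≤ T →
      ∀ (h : IsStoppingTime ℱ (fun ω => (min (τn n ω) (ENNReal.ofReal t)).toReal))
        (s : Set Ω), MeasurableSet[h.measurableSpace] s → (P s = 0 ↔ Q s = 0) := by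
  intro n hn t ht htT hσ s hs
  have hT : 0 ≤ T := ht.trans htT
  have hσT : ∀ ω, (min (τn n ω) (ENNReal.ofReal t)).toReal ≤ T := fun ω =>
    ENNReal.toReal_le_of_le_ofReal hT ((min_le_right _ _).trans (ENNReal.ofReal_le_ofReal htT))
  have hs_meas : MeasurableSet s :=
    hσ.measurableSpace_le_of_le (fun ω => WithTop.coe_le_coe.2 (hσT ω)) s hs
  refine ⟨fun hPs => ?_, fun hQs => hP ▸ withDensity_absolutelyContinuous Q _ hQs⟩
  rw [hP, withDensity_apply _ hs_meas] at hPs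
  have hMT : ∀ᵐ ω ∂Q, ω ∈ s → M T ω = 0 :=
    hmart.supermartingale.ae_eq_zero_of_setLIntegral_eq_zero (.of_forall (hnonneg T))
      (fun ω => ENNReal.toReal_le_of_le_ofReal hT (min_le_right _ _)) (fun ω => hrc ω _)
      hs_meas hPs
  have hMσ := hmart.submartingale.ae_eq_zero_of_ae_eq_zero_of_isStoppingTime
    (fun u => .of_forall (hnonneg u)) hσ hσT (fun ω => hrc ω _) hs hMT
  have hMσ_ne := ae_ne_zero_at_min_hitting_time (one_div_pos.2 (Nat.cast_pos.2 hn)) htT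
    (hM0.mono fun ω h => h ▸ one_ne_zero) hll hτ (hτn n) hnojump
  refine measure_eq_zero_iff_ae_notMem.2 ?_
  filter_upwards [hMσ, hMσ_ne] with ω hzero hne hωs using hne (hzero hωs)

/-- With `M` a nonnegative RCLL `Q`-martingale, `M 0 = 1`, not jumping to zero,
`τ = inf {t : M t = 0}`, `P` defined by `dP/dQ|_{F_t} = M (τ ∧ t)`, and
`τ_n = inf {t ≥ 0 : M t < 1/n}`, the measures `P` and `Q` are equivalent on the σ-algebra
`F_{t ∧ τ_n}` for each `t ∈ [0, T]` and each `n ≥ 1`. -/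
theorem equivalent_on_stopped_sigma_algebra
    {Ω : Type*} {mΩ : MeasurableSpace Ω} (ℱ : Filtration ℝ mΩ)
    (Q : Measure Ω) [IsProbabilityMeasure Q]
    (M : ℝ → Ω → ℝ) (T : ℝ) (hT : 0 < T)
    (hmart : Martingale M ℱ Q)
    (hprog : ProgMeasurable ℱ M)
    (hnonneg : ∀ t ω, 0 ≤ M t ω)
    (hM0 : ∀ᵐ ω ∂Q, M 0 ω = 1)
    -- RCLL paths
    (hrc : ∀ ω, ∀ t : ℝ, ContinuousWithinAt (fun s => M s ω) (Set.Ici t) t)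
    (hll : ∀ ω, ∀ t : ℝ, 0 < t →
      ∃ l : ℝ, Tendsto (fun s => M s ω) (nhdsWithin t (Set.Iio t)) (nhds l))
    -- the hitting time of zero, with convention `inf ∅ = +∞`
    (τ : Ω → ℝ≥0∞)
    (hτ : ∀ ω, τ ω = ⨅ t ∈ {s : ℝ | 0 ≤ s ∧ M s ω = 0}, ENNReal.ofReal t)
    -- `M` does not jump to zero
    (hnojump : Q ({ω | τ ω ≤ ENNReal.ofReal T} ∩
      {ω | 0 < Function.leftLim (fun s => M s ω) ((τ ω).toReal)}) = 0)
    -- the times `τ_n = inf {t ≥ 0 : M t < 1/n}`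
    (τn : ℕ → Ω → ℝ≥0∞)
    (hτn : ∀ n ω, τn n ω = ⨅ t ∈ {s : ℝ | 0 ≤ s ∧ M s ω < 1 / (n : ℝ)}, ENNReal.ofReal t)
    (P : Measure Ω)
    (hP : P = Q.withDensity
      (fun ω => ENNReal.ofReal (M ((min (τ ω) (ENNReal.ofReal T)).toReal) ω))) :
    ∀ n : ℕ, 1 ≤ n → ∀ t : ℝ, 0 ≤ t → t ≤ T →
      ∀ (h : IsStoppingTime ℱ (fun ω => (min (τn n ω) (ENNReal.ofReal t)).toReal))
        (s : Set Ω), MeasurableSet[h.measurableSpace] s → (P s = 0 ↔ Q s = 0) :=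
  equivalent_on_stopped_sigma_algebra_general ℱ Q M T hmart hnonneg hM0 hrc hll τ hτ hnojump τn hτn
    P hP
end

section
/- Let S_t = 1 + ∫_0^t σ^S_u dW_u be a continuous local martingale under any measure Q̄ equivalent to Q, with continuous volatility σ^S, and let σ_1 = inf{t : S_t ≤ 0}, σ_2 = inf{t : σ^S_t ≤ σ̲}, σ = σ_1 ∧ σ_2, where 0 < σ̲ < σ^S_0. Then Q̄[σ ≤ T] ≥ Q̄[B*_{σ̲² T} ≤ −1] > 0, where B*_t = inf_{0≤u≤t} B_u and B is the DDS Brownian motion of the local martingale ∫ σ^S dW. In particular sup_{Q̄ ∈ ELMM} Q̄[σ > T] ≤ 1 − Q̄[B*_{σ̲²T} ≤ −1] < 1, a bound independent of Q̄. -/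
open MeasureTheory Filter Set ProbabilityTheory
open scoped ENNReal NNReal

/-- The standard normal cumulative distribution function. -/
noncomputable def stdNormalCDF (x : ℝ) : ℝ :=
  ∫ u in Set.Iic x, (Real.sqrt (2 * Real.pi))⁻¹ * Real.exp (-u ^ 2 / 2)

/-- `W` is a standard Brownian motion under `μ`. -/
def IsStandardBM {Ω : Type*} [MeasurableSpace Ω] (μ : Measure Ω)
    (W : ℝ → Ω → ℝ) : Prop :=
  (∀ ω, W 0 ω = 0) ∧ (∀ ω, Continuous fun t => W t ω) ∧
  (∀ t, Measurable (W t)) ∧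
  (∀ s t : ℝ, 0 ≤ s → s ≤ t →
    Measure.map (fun ω => W t ω - W s ω) μ
      = ProbabilityTheory.gaussianReal 0 (Real.toNNReal (t - s))) ∧
  (∀ (n : ℕ) (t : ℕ → ℝ), Monotone t → 0 ≤ t 0 →
    ProbabilityTheory.iIndepFun
      (fun (i : Fin n) ω => W (t (i + 1)) ω - W (t i) ω) μ)

/-!
Along the clock `u t = ∫₀ᵗ (σ^S)²` one has `S t = 1 + B (u t)`. While `σ^S > σ̲` the clock runs
at speed at least `σ̲²`, so it passes `σ̲² T` before time `T`; hence a visit of `B` to `-1` before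
`σ̲² T` forces `S` to vanish, or `σ^S` to drop to `σ̲`, before `T`.

The probability of that visit is `2 P(B_c ≤ b)` (reflection principle), proved on dyadic grids.
After the first grid time at which `B < b`, the remaining increment up to `c` is a centred
Gaussian independent of the past, so it has either sign with probability at most `1/2`. This gives
`P(B < b somewhere on the grid) ≤ 2 P(B_c < b)` and, up to the event that the first entry
overshoots `B_c`, the reverse inequality. Such an overshoot needs a grid step of fixed size, which
continuity of the paths rules out as the mesh goes to `0`.
-/

open scoped Topology

lemma stdNormalCDF_eq_toReal_gaussianReal (x : ℝ) :
    stdNormalCDF x = (gaussianReal 0 1 (Iic x)).toReal := by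
  rw [gaussianReal_apply_eq_integral 0 one_ne_zero,
    ENNReal.toReal_ofReal (integral_nonneg fun u => gaussianPDFReal_nonneg 0 1 u)]
  refine setIntegral_congr_fun measurableSet_Iic fun u _ => ?_
  simp [gaussianPDFReal, neg_div]

lemma stdNormalCDF_pos (x : ℝ) : 0 < stdNormalCDF x := by
  rw [stdNormalCDF_eq_toReal_gaussianReal]
  refine ENNReal.toReal_pos (fun h => ?_) (measure_ne_top _ _)
  simpa using gaussianReal_absolutelyContinuous' 0 one_ne_zero h

lemma toReal_gaussianReal_Iic {v : ℝ} (hv : 0 < v) (x : ℝ) :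
    (gaussianReal 0 v.toNNReal (Iic x)).toReal = stdNormalCDF (x / √v) := by
  have hmap : (gaussianReal 0 1).map (√v * ·) = gaussianReal 0 v.toNNReal := by
    rw [gaussianReal_map_const_mul]
    congr 1
    · simp
    · ext; simp [Real.sq_sqrt hv.le, hv.le]
  rw [← hmap, Measure.map_apply (measurable_const_mul _) measurableSet_Iic,
    stdNormalCDF_eq_toReal_gaussianReal]
  congr 3
  ext y
  simp [le_div_iff₀' (Real.sqrt_pos.2 hv)]

lemma gaussianReal_Iio_zero_eq_Ioi_zero (v : ℝ≥0) :
    gaussianReal 0 v (Iio 0) = gaussianReal 0 v (Ioi 0) := by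
  conv_lhs => rw [← neg_zero, ← gaussianReal_map_neg]
  rw [Measure.map_apply measurable_neg measurableSet_Iio]
  simp

lemma gaussianReal_Ioi_zero_le_half (v : ℝ≥0) : gaussianReal 0 v (Ioi 0) ≤ 2⁻¹ := by
  have h : gaussianReal 0 v (Iio 0 ∪ Ioi 0) ≤ 1 := prob_le_one
  rw [measure_union ((Iio_disjoint_Ici le_rfl).mono_right Ioi_subset_Ici_self)
    measurableSet_Ioi, gaussianReal_Iio_zero_eq_Ioi_zero, ← two_mul] at h
  rwa [ENNReal.le_inv_iff_mul_le, mul_comm]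

lemma gaussianReal_Iio_zero_le_half (v : ℝ≥0) : gaussianReal 0 v (Iio 0) ≤ 2⁻¹ :=
  gaussianReal_Iio_zero_eq_Ioi_zero v ▸ gaussianReal_Ioi_zero_le_half v

lemma natCast_mul_div_two_pow_mem_Icc {c : ℝ} (hc : 0 ≤ c) {j k : ℕ} (hk : k ≤ 2 ^ j) :
    (k : ℝ) * (c / 2 ^ j) ∈ Icc 0 c := by
  refine ⟨by positivity, ?_⟩
  calc (k : ℝ) * (c / 2 ^ j) ≤ 2 ^ j * (c / 2 ^ j) := by gcongr; exact_mod_cast hk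
    _ = c := by field_simp

lemma natCast_two_pow_mul_div_two_pow (c : ℝ) (j : ℕ) :
    ((2 ^ j : ℕ) : ℝ) * (c / 2 ^ j) = c := by
  push_cast
  field_simp

lemma Continuous.exists_dyadic_lt {f : ℝ → ℝ} (hf : Continuous f) {c u b : ℝ} (hc : 0 < c)
    (hu : u ∈ Icc 0 c) (hfu : f u < b) : ∃ j k : ℕ, k ≤ 2 ^ j ∧ f (k * (c / 2 ^ j)) < b := by
  obtain ⟨η, hη, hball⟩ := Metric.isOpen_iff.1 (isOpen_Iio.preimage hf) u hfu
  obtain ⟨j, hj⟩ := pow_unbounded_of_one_lt (c / η) one_lt_two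
  set δ := c / 2 ^ j
  have hδ : 0 < δ := by positivity
  have hδη : δ < η := by
    rw [div_lt_iff₀ hη] at hj
    rw [div_lt_iff₀ (by positivity)]
    linarith
  have hlow := Nat.floor_le (div_nonneg hu.1 hδ.le)
  have hhigh := Nat.lt_floor_add_one (u / δ)
  rw [le_div_iff₀ hδ] at hlow
  rw [div_lt_iff₀ hδ] at hhigh
  refine ⟨j, ⌊u / δ⌋₊, Nat.floor_le_of_le ?_, hball ?_⟩
  · rw [div_le_iff₀ hδ, Nat.cast_pow, Nat.cast_ofNat]
    calc u ≤ c := hu.2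
      _ = 2 ^ j * δ := by simp only [δ]; field_simp
  · rw [Metric.mem_ball, Real.dist_eq, abs_sub_lt_iff]
    constructor <;> nlinarith

lemma Continuous.eventually_dyadic_sub_lt {f : ℝ → ℝ} (hf : Continuous f) {c ε : ℝ}
    (hc : 0 ≤ c) (hε : 0 < ε) :
    ∀ᶠ j in atTop, ∀ k : ℕ, k < 2 ^ j →
      f (k * (c / 2 ^ j)) - f ((k + 1 : ℕ) * (c / 2 ^ j)) < ε := by
  obtain ⟨δ, hδ, hUC⟩ := Metric.uniformContinuousOn_iff.1
    (isCompact_Icc.uniformContinuousOn_of_continuous hf.continuousOn) ε hε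
  have hmesh : Tendsto (fun j : ℕ => c / 2 ^ j) atTop (𝓝 0) :=
    (tendsto_pow_atTop_atTop_of_one_lt one_lt_two).const_div_atTop c
  filter_upwards [hmesh.eventually (gt_mem_nhds hδ)] with j hj k hk
  have hmesh_nonneg : 0 ≤ c / 2 ^ j := by positivity
  refine (le_abs_self _).trans_lt (hUC _ (natCast_mul_div_two_pow_mem_Icc hc hk.le) _
    (natCast_mul_div_two_pow_mem_Icc hc hk) ?_)
  rw [Real.dist_eq, abs_sub_lt_iff]
  push_cast
  constructor <;> nlinarith

lemma setOf_exists_lt_eq_iUnion_dyadic {Ω : Type*} {B : ℝ → Ω → ℝ}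
    (hB : ∀ ω, Continuous fun t => B t ω) {c : ℝ} (hc : 0 < c) (b : ℝ) :
    {ω | ∃ u ∈ Icc 0 c, B u ω < b}
      = ⋃ j : ℕ, {ω | ∃ k : ℕ, k ≤ 2 ^ j ∧ B (k * (c / 2 ^ j)) ω < b} := by
  ext ω
  simp only [mem_iUnion, mem_ofPred_eq]
  constructor
  · rintro ⟨u, hu, hub⟩
    exact (hB ω).exists_dyadic_lt hc hu hub
  · rintro ⟨j, k, hk, hkb⟩
    exact ⟨_, natCast_mul_div_two_pow_mem_Icc hc.le hk, hkb⟩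

lemma exists_setIntegral_Ioc_eq {f : ℝ → ℝ} (hf : Continuous f) {a T u : ℝ} (hT : 0 ≤ T)
    (hfa : ∀ t ∈ Icc 0 T, a ≤ f t) (hu : u ∈ Icc 0 (a * T)) :
    ∃ t ∈ Icc 0 T, ∫ v in Ioc 0 t, f v = u := by
  have hF : Continuous fun t => ∫ v in (0)..t, f v :=
    intervalIntegral.continuous_primitive (fun _ _ => hf.intervalIntegrable _ _) 0
  have hFT : a * T ≤ ∫ v in (0)..T, f v := by
    simpa [mul_comm] using intervalIntegral.integral_mono_on hT
      (intervalIntegrable_const : IntervalIntegrable (fun _ => a) volume 0 T)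
      (hf.intervalIntegrable 0 T) hfa
  obtain ⟨t, ht, hFt⟩ := intermediate_value_Icc hT hF.continuousOn
    ⟨by simpa using hu.1, hu.2.trans hFT⟩
  exact ⟨t, ht, by rw [← intervalIntegral.integral_of_le ht.1]; exact hFt⟩

section GridFirstEntry

variable {Ω : Type*} {B : ℝ → Ω → ℝ} {h : ℝ} {L : Set ℝ}

def gridFirstEntry (B : ℝ → Ω → ℝ) (h : ℝ) (L : Set ℝ) (k : ℕ) : Set Ω :=
  {ω | B (k * h) ω ∈ L ∧ ∀ j < k, B (j * h) ω ∉ L}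

lemma exists_mem_gridFirstEntry {ω : Ω} {k : ℕ} (hk : B (k * h) ω ∈ L) :
    ∃ j ≤ k, ω ∈ gridFirstEntry B h L j := by
  classical
  have hex : ∃ j : ℕ, B (j * h) ω ∈ L := ⟨k, hk⟩
  exact ⟨Nat.find hex, Nat.find_min' hex hk, Nat.find_spec hex, fun j hj => Nat.find_min hex hj⟩

lemma pairwise_disjoint_gridFirstEntry :
    Pairwise fun i j => Disjoint (gridFirstEntry B h L i) (gridFirstEntry B h L j) := by
  intro i j hij
  rcases hij.lt_or_gt with hlt | hlt
  · exact disjoint_left.2 fun ω hi hj => hj.2 i hlt hi.1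
  · exact disjoint_left.2 fun ω hi hj => hi.2 j hlt hj.1

lemma biUnion_gridFirstEntry (n : ℕ) :
    ⋃ k ∈ Finset.Iic n, gridFirstEntry B h L k = {ω | ∃ k ≤ n, B (k * h) ω ∈ L} := by
  ext ω
  simp only [mem_iUnion, Finset.mem_Iic, mem_ofPred_eq, exists_prop]
  constructor
  · rintro ⟨k, hkn, hk, -⟩
    exact ⟨k, hkn, hk⟩
  · rintro ⟨k, hkn, hk⟩
    obtain ⟨j, hjk, hj⟩ := exists_mem_gridFirstEntry hk
    exact ⟨j, hjk.trans hkn, hj⟩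

lemma measurableSet_gridFirstEntry {m : MeasurableSpace Ω} {k : ℕ}
    (hB : ∀ j ≤ k, Measurable (B (j * h))) (hL : MeasurableSet L) :
    MeasurableSet (gridFirstEntry B h L k) := by
  simp only [gridFirstEntry, ofPred_and, ofPred_forall]
  exact (hB k le_rfl hL).inter
    (.iInter fun j => .iInter fun hj => (hB j hj.le hL).compl)

end GridFirstEntry

namespace IsStandardBM

variable {Ω : Type*} [MeasurableSpace Ω] {μ : Measure Ω} {B : ℝ → Ω → ℝ} {h : ℝ}

lemma measure_sub_mem (hB : IsStandardBM μ B) {s t : ℝ} (hs : 0 ≤ s) (hst : s ≤ t)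
    {A : Set ℝ} (hA : MeasurableSet A) :
    μ {ω | B t ω - B s ω ∈ A} = gaussianReal 0 (t - s).toNNReal A := by
  have hmeas : Measurable fun ω => B t ω - B s ω := (hB.2.2.1 t).sub (hB.2.2.1 s)
  rw [← hB.2.2.2.1 s t hs hst, Measure.map_apply hmeas hA]
  rfl

lemma measure_mem (hB : IsStandardBM μ B) {t : ℝ} (ht : 0 ≤ t) {A : Set ℝ}
    (hA : MeasurableSet A) : μ {ω | B t ω ∈ A} = gaussianReal 0 t.toNNReal A := by
  simpa [hB.1] using hB.measure_sub_mem le_rfl ht hA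

lemma isProbabilityMeasure (hB : IsStandardBM μ B) : IsProbabilityMeasure μ :=
  ⟨by simpa using hB.measure_mem le_rfl MeasurableSet.univ⟩

lemma toReal_measure_le (hB : IsStandardBM μ B) {t : ℝ} (ht : 0 < t) (b : ℝ) :
    (μ {ω | B t ω ≤ b}).toReal = stdNormalCDF (b / √t) :=
  (congrArg ENNReal.toReal (hB.measure_mem ht.le measurableSet_Iic)).trans
    (toReal_gaussianReal_Iic ht b)

lemma measure_lt_eq_measure_le (hB : IsStandardBM μ B) {t : ℝ} (ht : 0 < t) (b : ℝ) :
    μ {ω | B t ω < b} = μ {ω | B t ω ≤ b} := by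
  have := nullSingletonClass_gaussianReal (μ := 0) (Real.toNNReal_pos.2 ht).ne'
  change μ {ω | B t ω ∈ Iio b} = μ {ω | B t ω ∈ Iic b}
  rw [hB.measure_mem ht.le measurableSet_Iio, hB.measure_mem ht.le measurableSet_Iic]
  exact measure_congr Iio_ae_eq_Iic

lemma indep_grid_increment (hB : IsStandardBM μ B) (hh : 0 ≤ h) {k n : ℕ}
    (hkn : k ≤ n) :
    Indep (⨆ j ≤ k, MeasurableSpace.comap (B (j * h)) inferInstance)
      (MeasurableSpace.comap (fun ω => B (n * h) ω - B (k * h) ω) inferInstance) μ := by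
  set incr : Fin n → Ω → ℝ := fun i ω => B ((i + 1 : ℕ) * h) ω - B (i * h) ω
  have hincr : ∀ i, Measurable (incr i) := fun i => (hB.2.2.1 _).sub (hB.2.2.1 _)
  set M : Fin n → MeasurableSpace Ω := fun i => MeasurableSpace.comap (incr i) inferInstance
  have hM : Indep (⨆ i ∈ {i : Fin n | (i : ℕ) < k}, M i)
      (⨆ i ∈ {i : Fin n | k ≤ (i : ℕ)}, M i) μ := by
    refine indep_iSup_of_disjoint (fun i => (hincr i).comap_le)
      ((iIndepFun_iff_iIndep _ _ _).1 (hB.2.2.2.2 n (fun i => i * h)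
        (fun i j hij => mul_le_mul_of_nonneg_right (Nat.cast_le.2 hij) hh) (by simp))) ?_
    exact disjoint_left.2 fun i (hi : (i : ℕ) < k) (hi' : k ≤ (i : ℕ)) => hi'.not_gt hi
  have hmeas : ∀ (S : Set (Fin n)) (i : Fin n), i ∈ S →
      Measurable[⨆ i ∈ S, M i] (incr i) := fun S i hi =>
    (comap_measurable (incr i)).mono (le_iSup₂ (f := fun i (_ : i ∈ S) => M i) i hi) le_rfl
  have hstep : ∀ j (hj : j < n), B ((j + 1 : ℕ) * h) = B (j * h) + incr ⟨j, hj⟩ := by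
    intro j hj
    ext ω
    simp [incr]
  refine indep_of_indep_of_le_right (indep_of_indep_of_le_left hM ?_) ?_
  · refine iSup₂_le fun j hj => Measurable.comap_le ?_
    induction j with
    | zero => simp [funext hB.1]
    | succ j ih =>
      rw [hstep j (by omega)]
      exact (ih (by omega)).add (hmeas _ _ (show j < k by omega))
  · suffices ∀ m, k ≤ m → m ≤ n →
        Measurable[⨆ i ∈ {i : Fin n | k ≤ (i : ℕ)}, M i] fun ω => B (m * h) ω - B (k * h) ω from
      (this n hkn le_rfl).comap_le
    intro m hkm hmn
    induction m, hkm using Nat.le_induction with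
    | base => simp
    | succ m hkm ih =>
      have hm : m < n := by omega
      convert (ih hm.le).add (hmeas _ ⟨m, hm⟩ (show k ≤ m from hkm)) using 1
      ext ω
      simp only [hstep m hm, Pi.add_apply, add_sub_right_comm]

lemma measure_biUnion_gridFirstEntry_inter_le (hB : IsStandardBM μ B) (hh : 0 ≤ h)
    {L I : Set ℝ} (hL : MeasurableSet L) (hI : MeasurableSet I)
    (hI_half : ∀ v, gaussianReal 0 v I ≤ 2⁻¹) (n : ℕ) :
    μ (⋃ k ∈ Finset.Iic n, gridFirstEntry B h L k ∩ {ω | B (n * h) ω - B (k * h) ω ∈ I})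
      ≤ μ {ω | ∃ k ≤ n, B (k * h) ω ∈ L} / 2 := by
  calc _ ≤ ∑ k ∈ Finset.Iic n,
          μ (gridFirstEntry B h L k ∩ {ω | B (n * h) ω - B (k * h) ω ∈ I}) :=
        measure_biUnion_finset_le _ _
    _ = ∑ k ∈ Finset.Iic n,
          μ (gridFirstEntry B h L k) * μ {ω | B (n * h) ω - B (k * h) ω ∈ I} := by
        refine Finset.sum_congr rfl fun k hk => ?_
        refine (Indep_iff _ _ μ).1 (hB.indep_grid_increment hh (Finset.mem_Iic.1 hk)) _ _
          (measurableSet_gridFirstEntry (fun j hj => (comap_measurable _).mono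
            (le_iSup₂ (f := fun j (_ : j ≤ k) => MeasurableSpace.comap (B (j * h)) _) j hj)
            le_rfl) hL) (comap_measurable _ hI)
    _ ≤ ∑ k ∈ Finset.Iic n, μ (gridFirstEntry B h L k) * 2⁻¹ := by
        gcongr with k hk
        have hkn : (k : ℝ) * h ≤ n * h := by gcongr; exact_mod_cast Finset.mem_Iic.1 hk
        rw [hB.measure_sub_mem (by positivity) hkn hI]
        exact hI_half _
    _ = μ {ω | ∃ k ≤ n, B (k * h) ω ∈ L} / 2 := by
        rw [← Finset.sum_mul, ← measure_biUnion_finset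
          ((pairwise_disjoint_gridFirstEntry (B := B)).set_pairwise _)
          (fun k _ => measurableSet_gridFirstEntry (fun j _ => hB.2.2.1 _) hL),
          biUnion_gridFirstEntry, div_eq_mul_inv]

lemma measure_exists_grid_lt_le (hB : IsStandardBM μ B) (hh : 0 ≤ h) (n : ℕ) (b : ℝ) :
    μ {ω | ∃ k ≤ n, B (k * h) ω < b} ≤ 2 * μ {ω | B (n * h) ω < b} := by
  have := hB.isProbabilityMeasure
  set x := μ {ω | ∃ k ≤ n, B (k * h) ω < b}
  have hsub : {ω | ∃ k ≤ n, B (k * h) ω < b} ⊆ {ω | B (n * h) ω < b} ∪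
      ⋃ k ∈ Finset.Iic n,
        gridFirstEntry B h (Iio b) k ∩ {ω | B (n * h) ω - B (k * h) ω ∈ Ioi 0} := by
    rintro ω ⟨k, hkn, hk⟩
    by_cases hn : B (n * h) ω < b
    · exact Or.inl hn
    obtain ⟨j, hjk, hj⟩ := exists_mem_gridFirstEntry (L := Iio b) hk
    refine Or.inr (mem_iUnion₂.2 ⟨j, Finset.mem_Iic.2 (hjk.trans hkn), hj, ?_⟩)
    have hj_lt : B (j * h) ω < b := hj.1
    simp only [mem_ofPred_eq, mem_Ioi]
    linarith [not_lt.1 hn]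
  have hx : x / 2 + x / 2 ≤ μ {ω | B (n * h) ω < b} + x / 2 := by
    rw [ENNReal.add_halves]
    refine (measure_mono hsub).trans ((measure_union_le _ _).trans ?_)
    gcongr
    exact hB.measure_biUnion_gridFirstEntry_inter_le hh measurableSet_Iio measurableSet_Ioi
      gaussianReal_Ioi_zero_le_half n
  calc x = 2 * (x / 2) := (ENNReal.mul_div_cancel two_ne_zero ENNReal.ofNat_ne_top).symm
    _ ≤ _ := by
      gcongr
      exact ENNReal.le_of_add_le_add_right (ENNReal.div_ne_top (measure_ne_top _ _) two_ne_zero)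
        hx

-- On the last event the first grid entry into `Iio b` lies below `B (n h)`, so the grid step into
-- it is at least `b - B (n h)`.
lemma measure_grid_lt_le_half_add (hB : IsStandardBM μ B) (hh : 0 ≤ h) {b : ℝ} (hb : b ≤ 0)
    (n : ℕ) :
    μ {ω | B (n * h) ω < b} ≤ μ {ω | ∃ k ≤ n, B (k * h) ω < b} / 2 +
      μ {ω | B (n * h) ω < b ∧
        ∃ k < n, b - B (n * h) ω ≤ B (k * h) ω - B ((k + 1 : ℕ) * h) ω} := by
  refine (measure_mono ?_).trans ((measure_union_le _ _).trans (add_le_add_left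
    (hB.measure_biUnion_gridFirstEntry_inter_le hh measurableSet_Iio measurableSet_Iio
      gaussianReal_Iio_zero_le_half n) _))
  intro ω hn
  obtain ⟨j, hjn, hj⟩ :=
    exists_mem_gridFirstEntry (L := Iio b) (show B (n * h) ω ∈ Iio b from hn)
  by_cases hdrop : B (n * h) ω < B (j * h) ω
  · exact Or.inl (mem_iUnion₂.2 ⟨j, Finset.mem_Iic.2 hjn, hj, by simpa using hdrop⟩)
  obtain _ | i := j
  · simp only [Nat.cast_zero, zero_mul, hB.1] at hdrop
    exact absurd hn (by simp only [mem_ofPred_eq]; linarith)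
  · refine Or.inr ⟨hn, i, by omega, ?_⟩
    have hi : ¬ B (i * h) ω < b := hj.2 i i.lt_succ_self
    linarith [not_lt.1 hi, not_lt.1 hdrop]

lemma measure_exists_lt_le (hB : IsStandardBM μ B) {c : ℝ} (hc : 0 < c) (b : ℝ) :
    μ {ω | ∃ u ∈ Icc 0 c, B u ω < b} ≤ 2 * μ {ω | B c ω < b} := by
  rw [setOf_exists_lt_eq_iUnion_dyadic hB.2.1 hc, Monotone.measure_iUnion]
  · refine iSup_le fun j => ?_
    simpa only [natCast_two_pow_mul_div_two_pow] using
      hB.measure_exists_grid_lt_le (h := c / 2 ^ j) (by positivity) (2 ^ j) b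
  · refine monotone_nat_of_le_succ fun j ω ⟨k, hk, hkb⟩ =>
      ⟨2 * k, by rw [pow_succ]; omega, ?_⟩
    have hgrid : ((2 * k : ℕ) : ℝ) * (c / 2 ^ (j + 1)) = k * (c / 2 ^ j) := by
      push_cast
      rw [pow_succ]
      field_simp
    rwa [hgrid]

lemma measurableSet_exists_lt (hB : IsStandardBM μ B) {c : ℝ} (hc : 0 < c) (b : ℝ) :
    MeasurableSet {ω | ∃ u ∈ Icc 0 c, B u ω < b} := by
  have hmeas := hB.2.2.1
  rw [setOf_exists_lt_eq_iUnion_dyadic hB.2.1 hc]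
  exact .iUnion fun j => by measurability

lemma two_mul_measure_lt_le (hB : IsStandardBM μ B) {c b : ℝ} (hc : 0 < c) (hb : b ≤ 0) :
    2 * μ {ω | B c ω < b} ≤ μ {ω | ∃ u ∈ Icc 0 c, B u ω < b} := by
  have := hB.isProbabilityMeasure
  have hmeas := hB.2.2.1
  set O : ℕ → Set Ω := fun j => {ω | B c ω < b ∧ ∃ k : ℕ, k < 2 ^ j ∧
    b - B c ω ≤ B (k * (c / 2 ^ j)) ω - B ((k + 1 : ℕ) * (c / 2 ^ j)) ω}
  have hgrid : ∀ j,
      μ {ω | B c ω < b} ≤ μ {ω | ∃ u ∈ Icc 0 c, B u ω < b} / 2 + μ (O j) := by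
    intro j
    have := hB.measure_grid_lt_le_half_add (h := c / 2 ^ j) (by positivity) hb (2 ^ j)
    simp only [natCast_two_pow_mul_div_two_pow] at this
    refine this.trans (add_le_add_left (ENNReal.div_le_div_right (measure_mono ?_) _) _)
    rintro ω ⟨k, hk, hkb⟩
    exact ⟨_, natCast_mul_div_two_pow_mem_Icc hc.le hk, hkb⟩
  have hO : Tendsto (fun j => μ (O j)) atTop (𝓝 0) := by
    rw [← measure_empty (μ := μ)]
    refine tendsto_measure_of_ae_tendsto_indicator_of_isFiniteMeasure atTop MeasurableSet.empty
      (fun j => by measurability) (ae_of_all _ fun ω => ?_)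
    by_cases hω : B c ω < b
    · filter_upwards [(hB.2.1 ω).eventually_dyadic_sub_lt hc.le (sub_pos.2 hω)] with j hj
      simp only [O, mem_ofPred_eq, mem_empty_iff_false, iff_false, not_and, not_exists, not_le]
      exact fun _ k hk => by linarith [hj k hk]
    · exact .of_forall fun j => by simp [O, hω]
  have hhalf : μ {ω | B c ω < b} ≤ μ {ω | ∃ u ∈ Icc 0 c, B u ω < b} / 2 := by
    simpa using ge_of_tendsto' (hO.const_add _) hgrid
  calc 2 * μ {ω | B c ω < b} ≤ 2 * (μ {ω | ∃ u ∈ Icc 0 c, B u ω < b} / 2) := by gcongr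
    _ = _ := ENNReal.mul_div_cancel two_ne_zero ENNReal.ofNat_ne_top

theorem measure_exists_lt_eq (hB : IsStandardBM μ B) {c b : ℝ} (hc : 0 < c) (hb : b ≤ 0) :
    μ {ω | ∃ u ∈ Icc 0 c, B u ω < b} = 2 * μ {ω | B c ω ≤ b} := by
  rw [← hB.measure_lt_eq_measure_le hc]
  exact le_antisymm (hB.measure_exists_lt_le hc b) (hB.two_mul_measure_lt_le hc hb)

theorem measure_exists_le_eq (hB : IsStandardBM μ B) {c b : ℝ} (hc : 0 < c) (hb : b ≤ 0) :
    μ {ω | ∃ u ∈ Icc 0 c, B u ω ≤ b} = 2 * μ {ω | B c ω ≤ b} := by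
  have := hB.isProbabilityMeasure
  refine le_antisymm ?_ ((hB.measure_exists_lt_eq hc hb).symm.le.trans
    (measure_mono fun ω ⟨u, hu, hub⟩ => ⟨u, hu, hub.le⟩))
  set s : ℕ → Set Ω := fun m => {ω | B c ω < b + 1 / (m + 1)}
  have hs : ⋂ m, s m = {ω | B c ω ≤ b} := by
    ext ω
    simp only [s, mem_iInter, mem_ofPred_eq]
    refine ⟨fun hlt => le_of_forall_pos_lt_add fun ε hε => ?_, fun hle m => by
      linarith [Nat.one_div_pos_of_nat (α := ℝ) (n := m)]⟩
    obtain ⟨m, hm⟩ := exists_nat_one_div_lt hε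
    linarith [hlt m]
  have hlim : Tendsto (fun m => 2 * μ (s m)) atTop (𝓝 (2 * μ {ω | B c ω ≤ b})) := by
    rw [← hs]
    refine ENNReal.Tendsto.const_mul (tendsto_measure_iInter_atTop
      (fun m => (measurableSet_lt (hB.2.2.1 c) measurable_const).nullMeasurableSet)
      (fun m m' hm ω (hω : B c ω < b + 1 / (m' + 1)) =>
        show B c ω < b + 1 / (m + 1) from hω.trans_le (by gcongr)) ⟨0, measure_ne_top _ _⟩)
      (Or.inr ENNReal.ofNat_ne_top)
  refine ge_of_tendsto' hlim fun m =>
    le_trans (measure_mono ?_) (hB.measure_exists_lt_le hc _)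
  rintro ω ⟨u, hu, hub⟩
  exact ⟨u, hu, by linarith [Nat.one_div_pos_of_nat (α := ℝ) (n := m)]⟩

end IsStandardBM

theorem volatility_bet_uniform_bound_general
    {Ω : Type*} [MeasurableSpace Ω] (Qb : Measure Ω)
    (B : ℝ → Ω → ℝ) (hB : IsStandardBM Qb B)
    (σS : ℝ → Ω → ℝ) (hσScont : ∀ ω, Continuous fun t => σS t ω)
    (sl : ℝ) (hsl : 0 < sl)
    (S : ℝ → Ω → ℝ)
    -- Dambis–Dubins–Schwarz time change: `S t = 1 + B_{∫_0^t (σ^S_u)² du}`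
    (hDDS : ∀ ω, ∀ t : ℝ, 0 ≤ t →
      S t ω = 1 + B (∫ u in Set.Ioc (0 : ℝ) t, (σS u ω) ^ 2) ω)
    (T : ℝ) (hT : 0 < T) :
    (Qb {ω | ∃ u ∈ Set.Icc (0 : ℝ) (sl ^ 2 * T), B u ω ≤ -1}).toReal
        ≤ (Qb {ω | ∃ t ∈ Set.Icc (0 : ℝ) T, S t ω ≤ 0 ∨ σS t ω ≤ sl}).toReal ∧
    (Qb {ω | ∃ u ∈ Set.Icc (0 : ℝ) (sl ^ 2 * T), B u ω ≤ -1}).toReal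
        = 2 * stdNormalCDF (-(1 / (sl * Real.sqrt T))) ∧
    0 < 2 * stdNormalCDF (-(1 / (sl * Real.sqrt T))) ∧
    (Qb {ω | ∀ t ∈ Set.Icc (0 : ℝ) T, 0 < S t ω ∧ sl < σS t ω}).toReal
        ≤ 1 - 2 * stdNormalCDF (-(1 / (sl * Real.sqrt T))) ∧
    1 - 2 * stdNormalCDF (-(1 / (sl * Real.sqrt T))) < 1 := by
  have := hB.isProbabilityMeasure
  have hc : 0 < sl ^ 2 * T := by positivity
  have hsurvive : ∀ ω, (∀ t ∈ Icc 0 T, 0 < S t ω ∧ sl < σS t ω) →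
      ∀ u ∈ Icc 0 (sl ^ 2 * T), -1 < B u ω := by
    intro ω hω u hu
    obtain ⟨t, ht, hint⟩ := exists_setIntegral_Ioc_eq (f := fun t => σS t ω ^ 2)
      ((hσScont ω).pow 2) hT.le (fun t ht => pow_le_pow_left₀ hsl.le (hω t ht).2.le 2) hu
    have hS := (hω t ht).1
    rw [hDDS ω t ht.1, hint] at hS
    linarith
  have hhit : (Qb {ω | ∃ u ∈ Icc 0 (sl ^ 2 * T), B u ω ≤ -1}).toReal
      = 2 * stdNormalCDF (-(1 / (sl * √T))) := by
    rw [hB.measure_exists_le_eq hc (by norm_num), ENNReal.toReal_mul, hB.toReal_measure_le hc,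
      Real.sqrt_mul (sq_nonneg _), Real.sqrt_sq hsl.le]
    norm_num [neg_div]
  have hΦ := stdNormalCDF_pos (-(1 / (sl * √T)))
  refine ⟨measureReal_mono ?_, hhit, by positivity, ?_, by linarith⟩
  · rintro ω ⟨u, hu, hub⟩
    by_contra hstop
    simp only [mem_ofPred_eq, not_exists, not_and, not_or, not_le] at hstop
    exact (hsurvive ω hstop u hu).not_ge hub
  · calc Qb.real {ω | ∀ t ∈ Icc 0 T, 0 < S t ω ∧ sl < σS t ω}
        ≤ Qb.real {ω | ∃ u ∈ Icc 0 (sl ^ 2 * T), B u ω < -1}ᶜ :=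
          measureReal_mono fun ω hω ⟨u, hu, hub⟩ => (hsurvive ω hω u hu).not_gt hub
      _ = 1 - Qb.real {ω | ∃ u ∈ Icc 0 (sl ^ 2 * T), B u ω < -1} :=
          probReal_compl_eq_one_sub (hB.measurableSet_exists_lt hc _)
      _ = 1 - 2 * stdNormalCDF (-(1 / (sl * √T))) := by
          rw [measureReal_def, hB.measure_exists_lt_eq hc (by norm_num),
            ← hB.measure_exists_le_eq hc (by norm_num), hhit]

/-- for `S_t = 1 + ∫_0^t σ^S_u dW_u = 1 + B_{∫_0^t (σ^S_u)² du}` (Dambis–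
Dubins–Schwarz), `σ₁ = inf {t : S_t ≤ 0}`, `σ₂ = inf {t : σ^S_t ≤ σ̲}`, `σ = σ₁ ∧ σ₂`,
one has `Q̄[σ ≤ T] ≥ Q̄[B*_{σ̲²T} ≤ −1] = 2N(−1/(σ̲√T)) > 0`, hence
`Q̄[σ > T] ≤ 1 − 2N(−1/(σ̲√T)) < 1`, a bound independent of the ELMM `Q̄`. -/
theorem volatility_bet_uniform_bound
    {Ω : Type*} [MeasurableSpace Ω] (Qb : Measure Ω) [IsProbabilityMeasure Qb]
    (B : ℝ → Ω → ℝ) (hB : IsStandardBM Qb B)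
    (σS : ℝ → Ω → ℝ) (hσScont : ∀ ω, Continuous fun t => σS t ω)
    (sl : ℝ) (hsl : 0 < sl) (hsl0 : ∀ ω, sl < σS 0 ω)
    (S : ℝ → Ω → ℝ)
    -- Dambis–Dubins–Schwarz time change: `S t = 1 + B_{∫_0^t (σ^S_u)² du}`
    (hDDS : ∀ ω, ∀ t : ℝ, 0 ≤ t →
      S t ω = 1 + B (∫ u in Set.Ioc (0 : ℝ) t, (σS u ω) ^ 2) ω)
    (T : ℝ) (hT : 0 < T) :
    (Qb {ω | ∃ u ∈ Set.Icc (0 : ℝ) (sl ^ 2 * T), B u ω ≤ -1}).toReal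
        ≤ (Qb {ω | ∃ t ∈ Set.Icc (0 : ℝ) T, S t ω ≤ 0 ∨ σS t ω ≤ sl}).toReal ∧
    (Qb {ω | ∃ u ∈ Set.Icc (0 : ℝ) (sl ^ 2 * T), B u ω ≤ -1}).toReal
        = 2 * stdNormalCDF (-(1 / (sl * Real.sqrt T))) ∧
    0 < 2 * stdNormalCDF (-(1 / (sl * Real.sqrt T))) ∧
    (Qb {ω | ∀ t ∈ Set.Icc (0 : ℝ) T, 0 < S t ω ∧ sl < σS t ω}).toReal
        ≤ 1 - 2 * stdNormalCDF (-(1 / (sl * Real.sqrt T))) ∧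
    1 - 2 * stdNormalCDF (-(1 / (sl * Real.sqrt T))) < 1 :=
  volatility_bet_uniform_bound_general Qb B hB σS hσScont sl hsl S hDDS T hT
end
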